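/- arXiv:2005.02950 — 4 statements merged into one kernel-verified Lean document; each statement's English description precedes it below -/
import Mathlib

section
/- If X follows a d-dimensional elliptical distribution with density generator g, location vector μ and positive definite dispersion matrix Σ, then the conditional distribution of the first d-1 components given that the sum equals K is elliptical in dimension d-1 with location vector μ_K = μ' + ((K − μ_S)/σ_S²)(Σ1_d)', dispersion matrix Σ_K = Σ' − (1/σ_S²)(Σ1_d)'((Σ1_d)')^T, and density generator g_K(t) = g(t + Δ_K) where Δ_K = (1/2)((K − μ_S)/σ_S)², μ_S = 1_d^T μ and σ_S² = 1_d^T Σ 1_d. -/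
/-!
Parametrize the hyperplane `1ᵀz = 0` by `P u = (u, -∑ u)` and put `t = (K - μ_S) / σ_S²`.
On `{S = K}` we have `x - μ = P (x' - μ_K) + t Σ1`, and since `Σ⁻¹ Σ1 = 1` is orthogonal to
the hyperplane the quadratic form splits as `(x' - μ_K)ᵀ Pᵀ Σ⁻¹ P (x' - μ_K) + t² σ_S²`,
the last term being `2 Δ_K`. It remains to see `Σ_K⁻¹ = Pᵀ Σ⁻¹ P`: `Σ_K` is obtained from
`M = Σ - Σ1 (Σ1)ᵀ / σ_S²` by deleting the last row and column, `M` kills `1`, and `M Σ⁻¹`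
is the identity on the hyperplane.
-/

open Matrix

def snocNegSum (R : Type*) [CommRing R] (n : ℕ) : Matrix (Fin (n + 1)) (Fin n) R :=
  Matrix.of fun i j => (Fin.snoc (Pi.single j 1 : Fin n → R) (-1 : R) : Fin (n + 1) → R) i

section ZeroSum

variable {R : Type*} [CommRing R] {n : ℕ}

lemma snocNegSum_mulVec (u : Fin n → R) : snocNegSum R n *ᵥ u = Fin.snoc u (-∑ j, u j) := by
  ext i
  induction i using Fin.lastCases <;> simp [snocNegSum, mulVec, dotProduct, Pi.single_apply]

lemma transpose_snocNegSum_mulVec (y : Fin (n + 1) → R) :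
    (snocNegSum R n)ᵀ *ᵥ y = fun j => y j.castSucc - y (Fin.last n) := by
  ext j
  simp [snocNegSum, mulVec, dotProduct, Fin.sum_univ_castSucc, Pi.single_apply, sub_eq_add_neg]

lemma sum_snoc_neg_sum (u : Fin n → R) :
    ∑ i, (Fin.snoc u (-∑ j, u j) : Fin (n + 1) → R) i = 0 := by
  simp [Fin.sum_univ_castSucc]

lemma submatrix_castSucc_mulVec_transpose_snocNegSum {M : Matrix (Fin (n + 1)) (Fin (n + 1)) R}
    (hM : M *ᵥ 1 = 0) (y : Fin (n + 1) → R) :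
    M.submatrix Fin.castSucc Fin.castSucc *ᵥ ((snocNegSum R n)ᵀ *ᵥ y) =
      fun i => (M *ᵥ y) i.castSucc := by
  ext i
  have hrow : ∑ k, M i.castSucc k = 0 := by
    simpa [mulVec, dotProduct] using congrFun hM i.castSucc
  calc _ = ∑ k, M i.castSucc k * (y k - y (Fin.last n)) := by
        rw [transpose_snocNegSum_mulVec]
        simp [mulVec, dotProduct, Fin.sum_univ_castSucc]
    _ = (M *ᵥ y) i.castSucc := by
        simp [mul_sub, Finset.sum_sub_distrib, ← Finset.sum_mul, hrow, mulVec, dotProduct]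

lemma snoc_sub_eq_snoc_add_smul {μ w : Fin (n + 1) → R} {K t : R}
    (ht : t * ∑ i, w i = K - ∑ i, μ i) {μK : Fin n → R}
    (hμK : ∀ j, μK j = μ j.castSucc + t * w j.castSucc) (x' : Fin n → R) :
    Fin.snoc x' (K - ∑ j, x' j) - μ = Fin.snoc (x' - μK) (-∑ j, (x' - μK) j) + t • w := by
  ext i
  induction i using Fin.lastCases with
  | last =>
    simp only [Fin.sum_univ_castSucc, mul_add, Finset.mul_sum] at ht
    simp only [Pi.sub_apply, Pi.add_apply, Pi.smul_apply, smul_eq_mul, Fin.snoc_last, hμK,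
      Finset.sum_sub_distrib, Finset.sum_add_distrib]
    linear_combination -ht
  | cast j =>
    simp only [Pi.sub_apply, Pi.add_apply, Pi.smul_apply, smul_eq_mul, Fin.snoc_castSucc, hμK]
    ring

end ZeroSum

section SumConditioning

variable {ι R : Type*} [Fintype ι]

section CommRing

variable [CommRing R] {S : Matrix ι ι R}

lemma dotProduct_mulVec_one : (S *ᵥ 1) ⬝ᵥ 1 = ∑ i, ∑ j, S i j := by
  simp [mulVec, dotProduct]

variable [DecidableEq ι]

lemma inv_mulVec_mulVec_one (hS : IsUnit S.det) : S⁻¹ *ᵥ (S *ᵥ 1) = 1 := by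
  rw [mulVec_mulVec, nonsing_inv_mul _ hS, one_mulVec]

lemma mulVec_one_vecMul_inv (hSym : S.IsSymm) (hS : IsUnit S.det) : (S *ᵥ 1) ᵥ* S⁻¹ = 1 := by
  rw [← hSym.inv.eq, vecMul_transpose, inv_mulVec_mulVec_one hS]

lemma quadForm_add_smul_mulVec_one (hSym : S.IsSymm) (hS : IsUnit S.det) {z : ι → R}
    (hz : ∑ i, z i = 0) (t : R) :
    (z + t • S *ᵥ 1) ⬝ᵥ S⁻¹ *ᵥ (z + t • S *ᵥ 1) =
      z ⬝ᵥ S⁻¹ *ᵥ z + t ^ 2 * ∑ i, ∑ j, S i j := by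
  have hzw : z ⬝ᵥ S⁻¹ *ᵥ (S *ᵥ 1) = 0 := by rw [inv_mulVec_mulVec_one hS, dotProduct_one, hz]
  have hwz : (S *ᵥ 1) ⬝ᵥ S⁻¹ *ᵥ z = 0 := by
    rw [dotProduct_mulVec, mulVec_one_vecMul_inv hSym hS, one_dotProduct, hz]
  have hww : (S *ᵥ 1) ⬝ᵥ S⁻¹ *ᵥ (S *ᵥ 1) = ∑ i, ∑ j, S i j := by
    rw [inv_mulVec_mulVec_one hS, dotProduct_mulVec_one]
  simp only [mulVec_add, mulVec_smul, add_dotProduct, dotProduct_add, smul_dotProduct,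
    dotProduct_smul, hzw, hwz, hww, smul_eq_mul]
  ring

end CommRing

variable {𝕜 : Type*} [Field 𝕜]

def sumCondDispersion (S : Matrix ι ι 𝕜) : Matrix ι ι 𝕜 :=
  S - (∑ i, ∑ j, S i j)⁻¹ • vecMulVec (S *ᵥ 1) (S *ᵥ 1)

variable {S : Matrix ι ι 𝕜}

lemma sumCondDispersion_mulVec (y : ι → 𝕜) :
    sumCondDispersion S *ᵥ y = S *ᵥ y - ((∑ i, ∑ j, S i j)⁻¹ * ((S *ᵥ 1) ⬝ᵥ y)) • S *ᵥ 1 := by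
  rw [sumCondDispersion, sub_mulVec, smul_mulVec, vecMulVec_mulVec, op_smul_eq_smul, smul_smul]

lemma sumCondDispersion_mulVec_one (hσ : ∑ i, ∑ j, S i j ≠ 0) :
    sumCondDispersion S *ᵥ 1 = 0 := by
  rw [sumCondDispersion_mulVec, dotProduct_mulVec_one, inv_mul_cancel₀ hσ, one_smul, sub_self]

variable [DecidableEq ι]

lemma sumCondDispersion_mulVec_inv_mulVec (hSym : S.IsSymm) (hS : IsUnit S.det) {z : ι → 𝕜}
    (hz : ∑ i, z i = 0) : sumCondDispersion S *ᵥ (S⁻¹ *ᵥ z) = z := by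
  rw [sumCondDispersion_mulVec, dotProduct_mulVec, mulVec_one_vecMul_inv hSym hS, one_dotProduct,
    hz, mulVec_mulVec, mul_nonsing_inv _ hS, one_mulVec, mul_zero, zero_smul, sub_zero]

end SumConditioning

section ConstantSum

variable {𝕜 : Type*} [Field 𝕜] {n : ℕ} {S : Matrix (Fin (n + 1)) (Fin (n + 1)) 𝕜}

lemma inv_submatrix_sumCondDispersion (hSym : S.IsSymm) (hS : IsUnit S.det)
    (hσ : ∑ i, ∑ j, S i j ≠ 0) :
    ((sumCondDispersion S).submatrix Fin.castSucc Fin.castSucc)⁻¹ =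
      (snocNegSum 𝕜 n)ᵀ * S⁻¹ * snocNegSum 𝕜 n := by
  refine inv_eq_right_inv (mulVec_injective (funext fun u => ?_))
  rw [← mulVec_mulVec, ← mulVec_mulVec, ← mulVec_mulVec, snocNegSum_mulVec,
    submatrix_castSucc_mulVec_transpose_snocNegSum (sumCondDispersion_mulVec_one hσ),
    sumCondDispersion_mulVec_inv_mulVec hSym hS (sum_snoc_neg_sum u), one_mulVec]
  simp

lemma quadForm_snoc_sub (hSym : S.IsSymm) (hS : IsUnit S.det) (hσ : ∑ i, ∑ j, S i j ≠ 0)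
    {μ : Fin (n + 1) → 𝕜} {K : 𝕜} {μK : Fin n → 𝕜}
    (hμK : ∀ j, μK j = μ j.castSucc + (K - ∑ i, μ i) / (∑ i, ∑ j, S i j) * (S *ᵥ 1) j.castSucc)
    (x' : Fin n → 𝕜) :
    (Fin.snoc x' (K - ∑ j, x' j) - μ) ⬝ᵥ S⁻¹ *ᵥ (Fin.snoc x' (K - ∑ j, x' j) - μ) =
      (x' - μK) ⬝ᵥ ((sumCondDispersion S).submatrix Fin.castSucc Fin.castSucc)⁻¹ *ᵥ (x' - μK) +
        (K - ∑ i, μ i) ^ 2 / ∑ i, ∑ j, S i j := by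
  have ht : (K - ∑ i, μ i) / (∑ i, ∑ j, S i j) * ∑ i, (S *ᵥ 1) i = K - ∑ i, μ i := by
    rw [← dotProduct_one (S *ᵥ 1), dotProduct_mulVec_one, div_mul_cancel₀ _ hσ]
  rw [snoc_sub_eq_snoc_add_smul ht hμK, quadForm_add_smul_mulVec_one hSym hS (sum_snoc_neg_sum _),
    inv_submatrix_sumCondDispersion hSym hS hσ, ← snocNegSum_mulVec, ← mulVec_mulVec,
    ← mulVec_mulVec, dotProduct_mulVec (x' - μK), vecMul_transpose]
  field_simp

end ConstantSum

lemma Matrix.PosDef.sum_sum_pos {ι : Type*} [Fintype ι] [Nonempty ι] {S : Matrix ι ι ℝ}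
    (hS : S.PosDef) : 0 < ∑ i, ∑ j, S i j := by
  simpa [mulVec, dotProduct] using hS.dotProduct_mulVec_pos one_ne_zero

/-- If `X` is elliptical with location `μ`, positive definite dispersion `Sg` and density
generator `g`, then the conditional density of the first `n` components given that the sum
of all `n+1` components equals `K` is elliptical with location `μK`, dispersion `SgK` and
density generator `g_K(t) = g(t + ΔK)`. -/
theorem ellipticality_conditional_constant_sum
    (n : ℕ) (μ : Fin (n + 1) → ℝ) (Sg : Matrix (Fin (n + 1)) (Fin (n + 1)) ℝ)
    (hSg : Sg.PosDef)
    (g : ℝ → ℝ) (c : ℝ) (hc : 0 < c)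
    (f : (Fin (n + 1) → ℝ) → ℝ)
    (hf : ∀ x, f x = c / Real.sqrt Sg.det *
      g ((1 / 2) * ((x - μ) ⬝ᵥ Sg⁻¹ *ᵥ (x - μ))))
    (K fSK : ℝ) (hfSK : 0 < fSK)
    (μS σS2 : ℝ) (hμS : μS = ∑ j, μ j) (hσS2 : σS2 = ∑ i, ∑ j, Sg i j)
    (μK : Fin n → ℝ)
    (hμK : μK = fun j => μ j.castSucc + (K - μS) / σS2 * (Sg *ᵥ 1) j.castSucc)
    (SgK : Matrix (Fin n) (Fin n) ℝ)
    (hSgK : SgK = fun i j => Sg i.castSucc j.castSucc -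
      (1 / σS2) * ((Sg *ᵥ 1) i.castSucc * (Sg *ᵥ 1) j.castSucc))
    (ΔK : ℝ) (hΔK : ΔK = (1 / 2) * ((K - μS) / Real.sqrt σS2) ^ 2) :
    ∃ cK > 0, ∀ x' : Fin n → ℝ,
      f (Fin.snoc x' (K - ∑ j, x' j)) / fSK =
        cK * g ((1 / 2) * ((x' - μK) ⬝ᵥ SgK⁻¹ *ᵥ (x' - μK)) + ΔK) := by
  subst hμS hσS2
  have hσ := hSg.sum_sum_pos
  have hSK : SgK = (sumCondDispersion Sg).submatrix Fin.castSucc Fin.castSucc := by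
    ext i j
    simp [hSgK, sumCondDispersion, vecMulVec]
  refine ⟨c / Real.sqrt Sg.det / fSK, div_pos (div_pos hc (Real.sqrt_pos.2 hSg.det_pos)) hfSK,
    fun x' => ?_⟩
  have hquad := quadForm_snoc_sub (Matrix.isHermitian_iff_isSymm.mp hSg.isHermitian)
    hSg.det_pos.ne'.isUnit hσ.ne' (fun j => congrFun hμK j) x'
  rw [hf, hquad, ← hSK, hΔK, div_pow, Real.sq_sqrt hσ.le, mul_add, mul_div_right_comm]
end

section
/- For an elliptical random vector X = (X_1,…,X_d) ~ E_d(μ, Σ, ψ) with finite second moments, the conditional covariance of X_i and X_j given {S = K} equals σ_i σ_j (ρ_{X_i,X_j} − ρ_{X_i,S} ρ_{X_j,S}), where σ_j² = Var(X_j), ρ_{X_i,X_j} is the correlation of X_i and X_j, and ρ_{X_j,S} is the correlation of X_j with S = X_1+···+X_d. -/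
open Finset Matrix

/-! Since `C = a • Σ`, the matrix `a • Σ_K` is the partial covariance `Cᵢⱼ - rᵢ rⱼ / s` of `C`
with respect to `S`, where `r = C *ᵥ 1` holds the covariances `Cov(Xᵢ, S)` and `s = Var(S)` is
the sum of all entries of `C`. Expressing `Cᵢⱼ`, `rᵢ` and `s` through standard deviations and
correlations gives the claim; positive definiteness of `Σ` keeps every variance involved
positive, so no division degenerates. -/

/-- The correlation form of a partial covariance, with `σᵢ = √cᵢᵢ` and `σ_S = √s`. -/
theorem sqrt_mul_sqrt_mul_corr_sub_corr_mul_corr {cii cjj cij ri rj s : ℝ}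
    (hi : 0 < cii) (hj : 0 < cjj) (hs : 0 < s) :
    √cii * √cjj * (cij / (√cii * √cjj) - ri / (√cii * √s) * (rj / (√cjj * √s))) =
      cij - ri * rj / s := by
  have hi' : √cii ≠ 0 := (Real.sqrt_pos.2 hi).ne'
  have hj' : √cjj ≠ 0 := (Real.sqrt_pos.2 hj).ne'
  obtain ⟨t, ht, rfl⟩ : ∃ t, 0 < t ∧ s = t * t :=
    ⟨√s, Real.sqrt_pos.2 hs, (Real.mul_self_sqrt hs.le).symm⟩
  rw [Real.sqrt_mul_self ht.le]
  field_simp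

theorem Matrix.mulVec_one_apply {ι κ R : Type*} [Fintype κ] [NonAssocSemiring R]
    (M : Matrix ι κ R) (i : ι) : (M *ᵥ 1) i = ∑ j, M i j := by
  simp [mulVec, dotProduct_one]

theorem Matrix.PosDef.sum_sum_pos_s2 {ι R : Type*} [Fintype ι] [Nonempty ι] [Ring R]
    [PartialOrder R] [StarRing R] [Nontrivial R] {M : Matrix ι ι R} (hM : M.PosDef) :
    0 < ∑ i, ∑ j, M i j := by
  have h := hM.dotProduct_mulVec_pos (x := 1) one_ne_zero
  simpa [one_dotProduct, Matrix.mulVec_one_apply] using h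

/-- For an elliptical random vector with dispersion `Sg` (covariance `C = a • Sg`), the
conditional covariance of `X_i` and `X_j` given `{S = K}` (which is `a • ΣK`) equals
`σ_i σ_j (ρ_{ij} − ρ_{iS} ρ_{jS})`. -/
theorem conditional_covariance_elliptical
    (n : ℕ) (Sg : Matrix (Fin (n + 1)) (Fin (n + 1)) ℝ) (hSg : Sg.PosDef)
    (a : ℝ) (ha : 0 < a)
    (C : Matrix (Fin (n + 1)) (Fin (n + 1)) ℝ) (hC : C = a • Sg)
    (σS2 : ℝ) (hσS2 : σS2 = ∑ i, ∑ j, Sg i j)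
    (SgK : Matrix (Fin n) (Fin n) ℝ)
    (hSgK : SgK = fun i j => Sg i.castSucc j.castSucc -
      (1 / σS2) * ((Sg *ᵥ 1) i.castSucc * (Sg *ᵥ 1) j.castSucc))
    (CK : Matrix (Fin n) (Fin n) ℝ) (hCK : CK = a • SgK)
    (σ : Fin (n + 1) → ℝ) (hσ : ∀ j, σ j = Real.sqrt (C j j))
    (σS : ℝ) (hσS : σS = Real.sqrt (∑ i, ∑ j, C i j))
    (ρ : Fin (n + 1) → Fin (n + 1) → ℝ) (hρ : ∀ i j, ρ i j = C i j / (σ i * σ j))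
    (ρS : Fin (n + 1) → ℝ) (hρS : ∀ j, ρS j = (∑ k, C j k) / (σ j * σS)) :
    ∀ i j : Fin n, CK i j = σ i.castSucc * σ j.castSucc *
      (ρ i.castSucc j.castSucc - ρS i.castSucc * ρS j.castSucc) := by
  intro i j
  have hσS2_pos : 0 < σS2 := hσS2 ▸ hSg.sum_sum_pos_s2
  have hsum : ∑ i, ∑ j, C i j = a * σS2 := by simp [hC, hσS2, mul_sum]
  have hrow : ∀ k, ∑ l, C k l = a * (Sg *ᵥ 1) k := by
    simp [hC, Matrix.mulVec_one_apply, mul_sum]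
  have hdiag : ∀ k, 0 < C k k := fun k => by simpa [hC] using mul_pos ha hSg.diag_pos
  rw [hρ, hρS, hρS, hσ, hσ, hσS, sqrt_mul_sqrt_mul_corr_sub_corr_mul_corr (hdiag _) (hdiag _)
    (hsum ▸ mul_pos ha hσS2_pos), hsum, hrow, hrow, hCK, hSgK, hC]
  show a * (_ - _) = _
  simp only [Matrix.smul_apply, smul_eq_mul]
  field_simp
end

section
/- If X ~ E_d(μ, Σ, ψ) admits a density with a density generator g that is decreasing on [0,∞), then the conditional density of (X_1,…,X_{d-1}) given {S = K} is convex unimodal, i.e., all of its superlevel sets are convex. -/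
/-!
The elliptical density is `C • g ∘ q` with `q x = ½ (x - μ)ᵀ Σ⁻¹ (x - μ)` a nonnegative convex
quadratic. Convex functions are quasiconvex, and a function decreasing on the range of a
quasiconvex one turns it into a quasiconcave one, so `f_X` has convex superlevel sets.
Up to the positive factor `1 / f_S(K)`, the conditional density is `f_X` precomposed with an
affine parametrization of the hyperplane `{S = K}`, and affine preimages of convex sets are convex.
-/

open Finset Matrix

theorem Matrix.PosSemidef.convexOn_dotProduct_mulVec {m : Type*} [Fintype m]
    {M : Matrix m m ℝ} (hM : M.PosSemidef) : ConvexOn ℝ Set.univ fun x => x ⬝ᵥ M *ᵥ x := by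
  refine ⟨convex_univ, fun u _ v _ a b ha hb hab => ?_⟩
  have hgap : a • (u ⬝ᵥ M *ᵥ u) + b • (v ⬝ᵥ M *ᵥ v)
      - (a • u + b • v) ⬝ᵥ M *ᵥ (a • u + b • v) = a * b * ((u - v) ⬝ᵥ M *ᵥ (u - v)) := by
    obtain rfl : b = 1 - a := by linarith
    simp only [mulVec_add, mulVec_sub, mulVec_smul, dotProduct_add, dotProduct_sub,
      add_dotProduct, sub_dotProduct, smul_dotProduct, dotProduct_smul, smul_eq_mul]
    ring
  have hnonneg : 0 ≤ (u - v) ⬝ᵥ M *ᵥ (u - v) := by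
    simpa using hM.dotProduct_mulVec_nonneg (u - v)
  nlinarith [mul_nonneg (mul_nonneg ha hb) hnonneg]

theorem QuasiconvexOn.antitoneOn_comp {𝕜 E β γ : Type*} [Semiring 𝕜] [PartialOrder 𝕜]
    [AddCommMonoid E] [SMul 𝕜 E] [LinearOrder β] [Preorder γ] {s : Set E} {t : Set β}
    {f : E → β} {g : β → γ} (hg : AntitoneOn g t) (hf : QuasiconvexOn 𝕜 s f)
    (hft : Set.MapsTo f s t) : QuasiconcaveOn 𝕜 s (g ∘ f) := by
  intro r x hx y hy a b ha hb hab
  simp only [Function.comp_apply, Set.mem_ofPred_eq] at hx hy ⊢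
  obtain ⟨hz, hfz⟩ := hf (max (f x) (f y)) ⟨hx.1, le_max_left _ _⟩ ⟨hy.1, le_max_right _ _⟩
    ha hb hab
  rcases max_choice (f x) (f y) with h | h <;> rw [h] at hfz
  · exact ⟨hz, hx.2.trans (hg (hft hz) (hft hx.1) hfz)⟩
  · exact ⟨hz, hy.2.trans (hg (hft hz) (hft hy.1) hfz)⟩

theorem Matrix.PosSemidef.quasiconcaveOn_comp_dotProduct_mulVec {m : Type*} [Fintype m]
    {M : Matrix m m ℝ} (hM : M.PosSemidef) {g : ℝ → ℝ} (hg : AntitoneOn g (Set.Ici 0))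
    (μ : m → ℝ) :
    QuasiconcaveOn ℝ Set.univ fun x => g ((1 / 2) * ((x - μ) ⬝ᵥ M *ᵥ (x - μ))) := by
  have hconvex : ConvexOn ℝ Set.univ fun x => (1 / 2 : ℝ) • ((x - μ) ⬝ᵥ M *ᵥ (x - μ)) :=
    (hM.convexOn_dotProduct_mulVec.comp_affineMap
      (AffineMap.id ℝ (m → ℝ) - AffineMap.const ℝ (m → ℝ) μ)).smul (by norm_num)
  refine QuasiconvexOn.antitoneOn_comp hg hconvex.quasiconvexOn fun x _ => ?_
  simpa using hM.dotProduct_mulVec_nonneg (x - μ)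

/-- Parametrizes the hyperplane `{S = K}` of `ℝⁿ⁺¹` by its first `n` coordinates. -/
def snocSumAffine (n : ℕ) (K : ℝ) : (Fin n → ℝ) →ᵃ[ℝ] (Fin (n + 1) → ℝ) where
  toFun x := Fin.snoc x (K - ∑ j, x j)
  linear :=
    { toFun := fun x => Fin.snoc x (-∑ j, x j)
      map_add' := fun x y => by
        ext i
        induction i using Fin.lastCases
        · simp only [Pi.add_apply, Fin.snoc_last, sum_add_distrib]
          ring
        · simp only [Pi.add_apply, Fin.snoc_castSucc]
      map_smul' := fun a x => by
        ext i
        induction i using Fin.lastCases <;> simp [mul_sum] }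
  map_vadd' x v := by
    ext i
    induction i using Fin.lastCases
    · simp only [vadd_eq_add, LinearMap.coe_mk, AddHom.coe_mk, Pi.add_apply, Fin.snoc_last,
        sum_add_distrib]
      ring
    · simp only [vadd_eq_add, LinearMap.coe_mk, AddHom.coe_mk, Pi.add_apply,
        Fin.snoc_castSucc]

/-- If `X` is elliptical with a density generator `g` decreasing on `[0, ∞)`, then the
conditional density of the first `n` components given `{S = K}` is convex unimodal:
all of its superlevel sets are convex. -/
theorem convex_unimodality_conditional_elliptical
    (n : ℕ) (μ : Fin (n + 1) → ℝ) (Sg : Matrix (Fin (n + 1)) (Fin (n + 1)) ℝ)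
    (hSg : Sg.PosDef)
    (g : ℝ → ℝ) (hg : AntitoneOn g (Set.Ici 0))
    (c : ℝ) (hc : 0 < c)
    (f : (Fin (n + 1) → ℝ) → ℝ)
    (hf : ∀ x, f x = c / Real.sqrt Sg.det *
      g ((1 / 2) * ((x - μ) ⬝ᵥ Sg⁻¹ *ᵥ (x - μ))))
    (K fSK : ℝ) (hfSK : 0 < fSK) :
    ∀ t : ℝ, 0 < t →
      Convex ℝ {x' : Fin n → ℝ | t ≤ f (Fin.snoc x' (K - ∑ j, x' j)) / fSK} := by
  intro t _
  have hf_quasiconcave : QuasiconcaveOn ℝ Set.univ f := by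
    have hC : 0 ≤ c / Real.sqrt Sg.det := by positivity
    rw [show f = _ from funext hf]
    exact (hSg.inv.posSemidef.quasiconcaveOn_comp_dotProduct_mulVec hg μ).monotone_comp
      (monotone_mul_left_of_nonneg hC)
  have hslice : {x' : Fin n → ℝ | t ≤ f (Fin.snoc x' (K - ∑ j, x' j)) / fSK}
      = snocSumAffine n K ⁻¹' {x | x ∈ Set.univ ∧ t * fSK ≤ f x} := by
    ext x'
    simp only [Set.mem_preimage, Set.mem_univ, true_and, le_div_iff₀ hfSK]
    rfl
  rw [hslice]
  exact (hf_quasiconcave (t * fSK)).affine_preimage (snocSumAffine n K)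
end

section
/- The bivariate density f(u,v) = (9/4)·1{(u,v) ∈ ∪_{i=1}^3 [(i−1)/3, i/3]²} + (9/4)·1{(u,v) ∈ [1/3,2/3]²} on [0,1]² has marginal densities f₁(u) = f₂(u) = (3/4)·1{u ∈ [0,1]} + (3/4)·1{u ∈ [1/3,2/3]} which are convex unimodal, yet its superlevel set at level 9/4 equals [0,1/3]² ∪ [1/3,2/3]² ∪ [2/3,1]², which is neither convex nor star-shaped. -/
open MeasureTheory

/-- The square `[a,b] × [a,b]`. -/
def sqIcc (a b : ℝ) : Set (ℝ × ℝ) := Set.Icc a b ×ˢ Set.Icc a b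

/-- The union of the three diagonal squares. -/
def threeSquares : Set (ℝ × ℝ) :=
  sqIcc 0 (1 / 3) ∪ sqIcc (1 / 3) (2 / 3) ∪ sqIcc (2 / 3) 1

/-- The bivariate density `f(u,v) = (9/4)·1{(u,v) ∈ ∪ᵢ squares} + (9/4)·1{(u,v) ∈ middle}`. -/
noncomputable def fJoint : ℝ × ℝ → ℝ := fun p =>
  (9 / 4 : ℝ) * Set.indicator threeSquares (fun _ => (1 : ℝ)) p +
  (9 / 4 : ℝ) * Set.indicator (sqIcc (1 / 3) (2 / 3)) (fun _ => (1 : ℝ)) p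

/-- The claimed marginal density `f₁(u) = (3/4)·1{u ∈ [0,1]} + (3/4)·1{u ∈ [1/3,2/3]}`. -/
noncomputable def fMarg : ℝ → ℝ := fun u =>
  (3 / 4 : ℝ) * Set.indicator (Set.Icc (0 : ℝ) 1) (fun _ => (1 : ℝ)) u +
  (3 / 4 : ℝ) * Set.indicator (Set.Icc (1 / 3 : ℝ) (2 / 3)) (fun _ => (1 : ℝ)) u

open Set

/-!
Off the two vertical lines `u = 1/3` and `u = 2/3`, a vertical section of the union of squares
is a single interval of length `1/3`, so the density splits into a sum of products of
one-dimensional indicators; integrating out `v` gives the marginal. Both `fJoint` and `fMarg`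
are of the form `a·1_A + b·1_B` with `B ⊆ A`, whose positive superlevel sets are `A`, `B` or `∅`.
The union of squares is not star-shaped: a segment from a point below height `2/3` to `(1, 2/3)`
crosses the line `u = 5/6` below height `2/3`, where the set has no points, and symmetrically
for segments from a point at height `≥ 2/3` to `(0, 1/3)`.
-/

section NestedStep

variable {α : Type*} {A B : Set α} {a b t : ℝ}

noncomputable def nestedStep (A B : Set α) (a b : ℝ) (x : α) : ℝ :=
  a * A.indicator (fun _ => 1) x + b * B.indicator (fun _ => 1) x

lemma setOf_le_nestedStep_eq_outer (hBA : B ⊆ A) (hb : 0 ≤ b) (ht : 0 < t) (hta : t ≤ a) :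
    {x | t ≤ nestedStep A B a b x} = A := by
  ext x
  by_cases hA : x ∈ A
  · by_cases hB : x ∈ B <;> simp [nestedStep, hA, hB] <;> linarith
  · have hB : x ∉ B := fun h => hA (hBA h)
    simp [nestedStep, hA, hB, ht]

lemma setOf_le_nestedStep_eq_inner (hBA : B ⊆ A) (ht : 0 < t) (hat : a < t) (htb : t ≤ a + b) :
    {x | t ≤ nestedStep A B a b x} = B := by
  ext x
  by_cases hB : x ∈ B
  · simp [nestedStep, hB, hBA hB, htb]
  · by_cases hA : x ∈ A <;> simp [nestedStep, hA, hB, hat, ht]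

lemma setOf_le_nestedStep_eq_empty (hBA : B ⊆ A) (hb : 0 ≤ b) (ht : 0 < t) (habt : a + b < t) :
    {x | t ≤ nestedStep A B a b x} = ∅ := by
  ext x
  by_cases hA : x ∈ A
  · by_cases hB : x ∈ B <;> simp [nestedStep, hA, hB] <;> linarith
  · have hB : x ∉ B := fun h => hA (hBA h)
    simp [nestedStep, hA, hB, ht]

lemma convex_setOf_le_nestedStep {𝕜 : Type*} [Semiring 𝕜] [PartialOrder 𝕜] [AddCommMonoid α]
    [SMul 𝕜 α] (hBA : B ⊆ A) (hA : Convex 𝕜 A) (hB : Convex 𝕜 B) (hb : 0 ≤ b) (ht : 0 < t) :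
    Convex 𝕜 {x | t ≤ nestedStep A B a b x} := by
  rcases le_or_gt t a with hta | hat
  · rwa [setOf_le_nestedStep_eq_outer hBA hb ht hta]
  rcases le_or_gt t (a + b) with htb | habt
  · rwa [setOf_le_nestedStep_eq_inner hBA ht hat htb]
  · rw [setOf_le_nestedStep_eq_empty hBA hb ht habt]
    exact convex_empty

end NestedStep

lemma fJoint_eq_nestedStep :
    fJoint = nestedStep threeSquares (sqIcc (1 / 3) (2 / 3)) (9 / 4) (9 / 4) :=
  rfl

lemma fMarg_eq_nestedStep : fMarg = nestedStep (Icc 0 1) (Icc (1 / 3) (2 / 3)) (3 / 4) (3 / 4) :=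
  rfl

lemma indicator_union_union_of_notMem_inter {β M : Type*} [AddCommMonoid M] {s t r : Set β}
    {f : β → M} {x : β} (hst : x ∉ s ∩ t) (hsr : x ∉ s ∩ r) (htr : x ∉ t ∩ r) :
    (s ∪ t ∪ r).indicator f x = s.indicator f x + t.indicator f x + r.indicator f x := by
  rw [indicator_union_of_notMem_inter _ f, indicator_union_of_notMem_inter hst f]
  rintro ⟨hs | ht, hr⟩
  exacts [hsr ⟨hs, hr⟩, htr ⟨ht, hr⟩]

lemma notMem_inter_thirds {u : ℝ} (h₁ : u ≠ 1 / 3) (h₂ : u ≠ 2 / 3) :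
    u ∉ Icc 0 (1 / 3) ∩ Icc (1 / 3) (2 / 3) ∧ u ∉ Icc 0 (1 / 3) ∩ Icc (2 / 3) 1 ∧
      u ∉ Icc (1 / 3) (2 / 3) ∩ Icc (2 / 3) 1 := by
  refine ⟨?_, ?_, ?_⟩ <;> rintro ⟨⟨_, _⟩, _, _⟩
  · exact h₁ (by linarith)
  · linarith
  · exact h₂ (by linarith)

lemma fMarg_eq_of_ne {u : ℝ} (h₁ : u ≠ 1 / 3) (h₂ : u ≠ 2 / 3) :
    fMarg u = 3 / 4 * (Icc 0 (1 / 3)).indicator 1 u + 3 / 2 * (Icc (1 / 3) (2 / 3)).indicator 1 u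
      + 3 / 4 * (Icc (2 / 3) 1).indicator 1 u := by
  obtain ⟨h01, h02, h12⟩ := notMem_inter_thirds h₁ h₂
  have hsplit : Icc (0 : ℝ) 1 = Icc 0 (1 / 3) ∪ Icc (1 / 3) (2 / 3) ∪ Icc (2 / 3) 1 := by
    rw [Icc_union_Icc_eq_Icc, Icc_union_Icc_eq_Icc] <;> norm_num
  simp only [fMarg, hsplit]
  rw [indicator_union_union_of_notMem_inter h01 h02 h12]
  simp only [Pi.one_def]
  ring

lemma fJoint_eq_of_ne {u : ℝ} (h₁ : u ≠ 1 / 3) (h₂ : u ≠ 2 / 3) (v : ℝ) :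
    fJoint (u, v) =
      9 / 4 * (Icc 0 (1 / 3)).indicator 1 u * (Icc 0 (1 / 3)).indicator 1 v
      + 9 / 2 * (Icc (1 / 3) (2 / 3)).indicator 1 u * (Icc (1 / 3) (2 / 3)).indicator 1 v
      + 9 / 4 * (Icc (2 / 3) 1).indicator 1 u * (Icc (2 / 3) 1).indicator 1 v := by
  obtain ⟨h01, h02, h12⟩ := notMem_inter_thirds h₁ h₂
  have h := indicator_union_union_of_notMem_inter (f := (1 : ℝ × ℝ → ℝ)) (x := (u, v))
    (s := sqIcc 0 (1 / 3)) (t := sqIcc (1 / 3) (2 / 3)) (r := sqIcc (2 / 3) 1)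
    (fun h => h01 ⟨h.1.1, h.2.1⟩) (fun h => h02 ⟨h.1.1, h.2.1⟩) (fun h => h12 ⟨h.1.1, h.2.1⟩)
  simp only [sqIcc, indicator_prod_one] at h
  simp only [fJoint, threeSquares, sqIcc, ← Pi.one_def, h, indicator_prod_one]
  ring

lemma integral_fJoint_eq_fMarg {u : ℝ} (h₁ : u ≠ 1 / 3) (h₂ : u ≠ 2 / 3) :
    ∫ v, fJoint (u, v) = fMarg u := by
  have hint (a b : ℝ) : Integrable ((Icc a b).indicator (1 : ℝ → ℝ)) :=
    (integrableOn_const (C := (1 : ℝ)) measure_Icc_lt_top.ne).integrable_indicator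
      measurableSet_Icc
  have hvol (c a b : ℝ) (hab : a ≤ b) : ∫ v, c * (Icc a b).indicator 1 v = c * (b - a) := by
    rw [integral_const_mul, integral_indicator_one measurableSet_Icc,
      Real.volume_real_Icc_of_le hab]
  simp only [fJoint_eq_of_ne h₁ h₂]
  rw [integral_add, integral_add, hvol _ _ _ (by norm_num), hvol _ _ _ (by norm_num),
    hvol _ _ _ (by norm_num), fMarg_eq_of_ne h₁ h₂]
  · ring
  all_goals first
    | exact (hint _ _).const_mul _
    | exact ((hint _ _).const_mul _).add ((hint _ _).const_mul _)

lemma swap_mem_sqIcc {a b : ℝ} {p : ℝ × ℝ} : p.swap ∈ sqIcc a b ↔ p ∈ sqIcc a b :=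
  and_comm

lemma swap_mem_threeSquares {p : ℝ × ℝ} : p.swap ∈ threeSquares ↔ p ∈ threeSquares := by
  simp only [threeSquares, mem_union, swap_mem_sqIcc]

lemma fJoint_comm (u v : ℝ) : fJoint (u, v) = fJoint (v, u) := by
  change fJoint (u, v) = fJoint (u, v).swap
  classical
  simp only [fJoint, indicator_apply, swap_mem_threeSquares, swap_mem_sqIcc]

lemma mem_threeSquares {p : ℝ × ℝ} : p ∈ threeSquares ↔
    (0 ≤ p.1 ∧ p.1 ≤ 1 / 3 ∧ 0 ≤ p.2 ∧ p.2 ≤ 1 / 3) ∨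
    (1 / 3 ≤ p.1 ∧ p.1 ≤ 2 / 3 ∧ 1 / 3 ≤ p.2 ∧ p.2 ≤ 2 / 3) ∨
    (2 / 3 ≤ p.1 ∧ p.1 ≤ 1 ∧ 2 / 3 ≤ p.2 ∧ p.2 ≤ 1) := by
  simp only [threeSquares, sqIcc, mem_union, mem_prod, mem_Icc]
  tauto

lemma not_convex_threeSquares : ¬ Convex ℝ threeSquares := by
  intro hc
  have h := hc (x := (1 / 3, 0)) (y := (2 / 3, 1 / 3)) (mem_threeSquares.2 (by norm_num))
    (mem_threeSquares.2 (by norm_num)) (by norm_num : (0 : ℝ) ≤ 1 / 2)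
    (by norm_num : (0 : ℝ) ≤ 1 / 2) (by norm_num)
  norm_num [mem_threeSquares] at h

lemma exists_mem_openSegment_fst_eq {x y : ℝ × ℝ} {c : ℝ} (hx : x.1 < c) (hy : c < y.1) :
    ∃ p ∈ openSegment ℝ x y, p.1 = c ∧ p.2 ∈ openSegment ℝ x.2 y.2 := by
  have hc : c ∈ openSegment ℝ x.1 y.1 := (openSegment_eq_Ioo (hx.trans hy)).symm ▸ ⟨hx, hy⟩
  obtain ⟨p, hp, rfl⟩ :=
    (image_openSegment ℝ (LinearMap.fst ℝ ℝ ℝ).toAffineMap x y).symm.subset hc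
  exact ⟨p, hp, rfl,
    (image_openSegment ℝ (LinearMap.snd ℝ ℝ ℝ).toAffineMap x y).subset ⟨p, hp, rfl⟩⟩

lemma not_starShaped_threeSquares :
    ¬ ∃ x₀ ∈ threeSquares, ∀ y ∈ threeSquares, segment ℝ x₀ y ⊆ threeSquares := by
  rintro ⟨⟨a, b⟩, hx₀, hstar⟩
  have hx := mem_threeSquares.1 hx₀
  rcases lt_or_ge b (2 / 3) with hb | hb
  · have ha : a < 5 / 6 := by rcases hx with h | h | h <;> linarith [h.2.1, h.2.2.1]
    have hy : ((1 : ℝ), (2 / 3 : ℝ)) ∈ threeSquares := mem_threeSquares.2 (by norm_num)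
    obtain ⟨p, hp, hp₁, hp₂⟩ :=
      exists_mem_openSegment_fst_eq (x := (a, b)) (y := (1, 2 / 3)) (c := 5 / 6) ha (by norm_num)
    rw [openSegment_eq_Ioo hb] at hp₂
    have hpmem := mem_threeSquares.1 (hstar _ hy (openSegment_subset_segment _ _ _ hp))
    rcases hpmem with h | h | h <;> linarith [hp₂.2]
  · have ha : 1 / 6 < a := by rcases hx with h | h | h <;> linarith [h.1, h.2.2.2]
    have hy : ((0 : ℝ), (1 / 3 : ℝ)) ∈ threeSquares := mem_threeSquares.2 (by norm_num)
    obtain ⟨p, hp, hp₁, hp₂⟩ :=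
      exists_mem_openSegment_fst_eq (x := (0, 1 / 3)) (y := (a, b)) (c := 1 / 6) (by norm_num) ha
    rw [openSegment_eq_Ioo (by linarith)] at hp₂
    rw [openSegment_symm] at hp
    have hpmem := mem_threeSquares.1 (hstar _ hy (openSegment_subset_segment _ _ _ hp))
    rcases hpmem with h | h | h <;> linarith [hp₂.1]

/-- The bivariate density `fJoint` has (a.e.) marginal densities `fMarg` in both
coordinates, which are convex unimodal, yet its superlevel set at level `9/4` is the union
of the three diagonal squares, which is neither convex nor star-shaped. -/
theorem marginal_unimodality_does_not_imply_joint_unimodality :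
    (∀ᵐ u ∂(volume : Measure ℝ), (∫ v, fJoint (u, v)) = fMarg u) ∧
    (∀ᵐ v ∂(volume : Measure ℝ), (∫ u, fJoint (u, v)) = fMarg v) ∧
    (∀ t : ℝ, 0 < t → Convex ℝ {u : ℝ | t ≤ fMarg u}) ∧
    {p : ℝ × ℝ | (9 / 4 : ℝ) ≤ fJoint p} = threeSquares ∧
    ¬ Convex ℝ threeSquares ∧
    ¬ ∃ x₀ ∈ threeSquares, ∀ y ∈ threeSquares, segment ℝ x₀ y ⊆ threeSquares := by
  have hmarg : ∀ᵐ u ∂(volume : Measure ℝ), (∫ v, fJoint (u, v)) = fMarg u := by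
    filter_upwards [measure_eq_zero_iff_ae_notMem.1
      ((toFinite ({1 / 3, 2 / 3} : Set ℝ)).measure_zero volume)] with u hu
    simp only [mem_insert_iff, mem_singleton_iff, not_or] at hu
    exact integral_fJoint_eq_fMarg hu.1 hu.2
  refine ⟨hmarg, ?_, fun t ht => ?_, ?_, not_convex_threeSquares, not_starShaped_threeSquares⟩
  · filter_upwards [hmarg] with v hv
    simpa only [fJoint_comm _ v] using hv
  · rw [fMarg_eq_nestedStep]
    exact convex_setOf_le_nestedStep (Icc_subset_Icc (by norm_num) (by norm_num))
      (convex_Icc _ _) (convex_Icc _ _) (by norm_num) ht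
  · rw [fJoint_eq_nestedStep]
    exact setOf_le_nestedStep_eq_outer (subset_union_right.trans subset_union_left)
      (by norm_num) (by norm_num) le_rfl
end
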